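/- Let n ≥ 3 and let L ∈ ℝ^{n×n} be Minkowski-symmetric and null negative semi-definite. Let e₀ = (1,0,…,0) and let x̃ ∈ ℝⁿ satisfy ⟨e₀, x̃⟩ = 0 and ⟨x̃, x̃⟩ = 1, and set x = e₀ + x̃ (so that x is null). Assume ⟨Lx, x⟩ = 0. Then for every vector y ∈ ℝⁿ with ⟨y,y⟩ = 1, ⟨y, e₀⟩ = 0 and ⟨y, x̃⟩ = 0, one has ⟨Lx, y⟩ = 0. -/

import Mathlib

open Matrix Set

noncomputable section

/-- The Minkowski inner product on `ℝⁿ`: `⟨v,w⟩ = -v₀w₀ + Σ_{j≥1} vⱼwⱼ`. -/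
def mink {n : ℕ} (v w : Fin n → ℝ) : ℝ :=
  ∑ j : Fin n, (if (j : ℕ) = 0 then -(v j * w j) else v j * w j)

/-- A vector is null if its Minkowski square vanishes. -/
def IsNull {n : ℕ} (v : Fin n → ℝ) : Prop := mink v v = 0

/-- A matrix is symmetric with respect to the Minkowski inner product. -/
def MinkSymm {n : ℕ} (L : Matrix (Fin n) (Fin n) ℝ) : Prop :=
  ∀ v w : Fin n → ℝ, mink (L.mulVec v) w = mink v (L.mulVec w)

/-- A matrix is null negative-definite: `⟨Lv,v⟩ < 0` for all nonzero null `v`. -/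
def NullNegDef {n : ℕ} (L : Matrix (Fin n) (Fin n) ℝ) : Prop :=
  ∀ v : Fin n → ℝ, v ≠ 0 → IsNull v → mink (L.mulVec v) v < 0

/-- A matrix is null negative semi-definite: `⟨Lv,v⟩ ≤ 0` for all null `v`. -/
def NullNegSemi {n : ℕ} (L : Matrix (Fin n) (Fin n) ℝ) : Prop :=
  ∀ v : Fin n → ℝ, IsNull v → mink (L.mulVec v) v ≤ 0

/-- Entrywise derivative (within a set) of a matrix-valued function of a real variable. -/
def matDerivWithin {n : ℕ} (L : ℝ → Matrix (Fin n) (Fin n) ℝ) (s : Set ℝ) (t : ℝ) :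
    Matrix (Fin n) (Fin n) ℝ :=
  Matrix.of fun i j => derivWithin (fun u => L u i j) s t

/-! With `w = (e₀ - x̃)/4` every `z_t = x + t y + t² w` is null: the `t²` terms
`⟨y,y⟩ + 2⟨x,w⟩ = 1 - 1` cancel. Along this curve through `x` with velocity `y`, the quartic
`t ↦ ⟨L z_t, z_t⟩` is `≤ 0` and vanishes at `t = 0`, so `0` is a local maximum and its
derivative `2⟨Lx, y⟩` there vanishes. -/

section Minkowski

variable {n : ℕ}

lemma mink_comm (v w : Fin n → ℝ) : mink v w = mink w v := by
  unfold mink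
  refine Finset.sum_congr rfl fun j _ => ?_
  split_ifs <;> ring

lemma mink_add_left (u v w : Fin n → ℝ) : mink (u + v) w = mink u w + mink v w := by
  unfold mink
  rw [← Finset.sum_add_distrib]
  refine Finset.sum_congr rfl fun j _ => ?_
  split_ifs <;> simp only [Pi.add_apply] <;> ring

lemma mink_smul_left (a : ℝ) (v w : Fin n → ℝ) : mink (a • v) w = a * mink v w := by
  unfold mink
  rw [Finset.mul_sum]
  refine Finset.sum_congr rfl fun j _ => ?_
  split_ifs <;> simp only [Pi.smul_apply, smul_eq_mul] <;> ring

lemma mink_add_right (u v w : Fin n → ℝ) : mink u (v + w) = mink u v + mink u w := by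
  rw [mink_comm, mink_add_left, mink_comm v, mink_comm w]

lemma mink_smul_right (a : ℝ) (v w : Fin n → ℝ) : mink v (a • w) = a * mink v w := by
  rw [mink_comm, mink_smul_left, mink_comm w]

lemma mink_sub_left (u v w : Fin n → ℝ) : mink (u - v) w = mink u w - mink v w := by
  rw [sub_eq_add_neg, ← neg_one_smul ℝ v, mink_add_left, mink_smul_left]
  ring

lemma mink_sub_right (u v w : Fin n → ℝ) : mink u (v - w) = mink u v - mink u w := by
  rw [mink_comm, mink_sub_left, mink_comm v, mink_comm w]

lemma mink_basis_zero_self (hn : 0 < n) :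
    mink (fun j : Fin n => if j.val = 0 then (1 : ℝ) else 0)
      (fun j => if j.val = 0 then (1 : ℝ) else 0) = -1 := by
  have hj : ∀ j : Fin n, j.val = 0 ↔ j = ⟨0, hn⟩ := fun j =>
    ⟨fun h => Fin.ext h, fun h => h ▸ rfl⟩
  unfold mink
  simp_rw [hj]
  rw [Finset.sum_eq_single ⟨0, hn⟩ (fun j _ hj0 => by simp [hj0]) (by simp)]
  simp

lemma pos_of_mink_self_ne_zero {v : Fin n → ℝ} (hv : mink v v ≠ 0) : 0 < n := by
  rcases Nat.eq_zero_or_pos n with rfl | hn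
  · simp [mink] at hv
  · exact hn

lemma isNull_add_smul_add_smul {e u y : Fin n → ℝ} (hee : mink e e = -1) (huu : mink u u = 1)
    (hyy : mink y y = 1) (heu : mink e u = 0) (hey : mink e y = 0) (huy : mink u y = 0)
    (t : ℝ) : IsNull (e + u + t • y + t ^ 2 • ((4 : ℝ)⁻¹ • (e - u))) := by
  have hue : mink u e = 0 := by rw [mink_comm, heu]
  have hye : mink y e = 0 := by rw [mink_comm, hey]
  have hyu : mink y u = 0 := by rw [mink_comm, huy]
  simp only [IsNull, mink_add_left, mink_add_right, mink_smul_left, mink_smul_right,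
    mink_sub_left, mink_sub_right, hee, huu, hyy, heu, hey, huy, hue, hye, hyu]
  ring

end Minkowski

section NullCone

variable {n : ℕ} {L : Matrix (Fin n) (Fin n) ℝ}

lemma MinkSymm.mink_mulVec_comm (hL : MinkSymm L) (v w : Fin n → ℝ) :
    mink (L *ᵥ v) w = mink (L *ᵥ w) v := by
  rw [hL, mink_comm]

lemma MinkSymm.mink_mulVec_add_smul_add_smul (hL : MinkSymm L) (x y w : Fin n → ℝ) (t : ℝ) :
    mink (L *ᵥ (x + t • y + t ^ 2 • w)) (x + t • y + t ^ 2 • w) =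
      mink (L *ᵥ x) x + 2 * mink (L *ᵥ x) y * t
        + (2 * mink (L *ᵥ x) w + mink (L *ᵥ y) y) * t ^ 2
        + 2 * mink (L *ᵥ y) w * t ^ 3 + mink (L *ᵥ w) w * t ^ 4 := by
  simp only [mulVec_add, mulVec_smul, mink_add_left, mink_add_right, mink_smul_left,
    mink_smul_right]
  rw [hL.mink_mulVec_comm y x, hL.mink_mulVec_comm w x, hL.mink_mulVec_comm w y]
  ring

lemma hasDerivAt_quartic (a b c d e : ℝ) :
    HasDerivAt (fun t : ℝ => a + b * t + c * t ^ 2 + d * t ^ 3 + e * t ^ 4) b 0 := by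
  have h := ((((hasDerivAt_const (0 : ℝ) a).add ((hasDerivAt_id (0 : ℝ)).const_mul b)).add
    ((hasDerivAt_pow 2 (0 : ℝ)).const_mul c)).add ((hasDerivAt_pow 3 (0 : ℝ)).const_mul d)).add
    ((hasDerivAt_pow 4 (0 : ℝ)).const_mul e)
  exact h.congr_deriv (by simp)

theorem NullNegSemi.mink_mulVec_eq_zero (hsymm : MinkSymm L) (hsemi : NullNegSemi L)
    {x y w : Fin n → ℝ} (hnull : ∀ t : ℝ, IsNull (x + t • y + t ^ 2 • w))
    (hLx : mink (L *ᵥ x) x = 0) : mink (L *ᵥ x) y = 0 := by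
  set Q : ℝ → ℝ := fun t => mink (L *ᵥ (x + t • y + t ^ 2 • w)) (x + t • y + t ^ 2 • w)
  have hQ : Q = fun t => mink (L *ᵥ x) x + 2 * mink (L *ᵥ x) y * t
      + (2 * mink (L *ᵥ x) w + mink (L *ᵥ y) y) * t ^ 2
      + 2 * mink (L *ᵥ y) w * t ^ 3 + mink (L *ᵥ w) w * t ^ 4 :=
    funext (hsymm.mink_mulVec_add_smul_add_smul x y w)
  have hmax : IsLocalMax Q 0 := Filter.Eventually.of_forall fun t => by
    simpa [Q, hLx] using hsemi _ (hnull t)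
  have hderiv : HasDerivAt Q (2 * mink (L *ᵥ x) y) 0 := hQ ▸ hasDerivAt_quartic _ _ _ _ _
  simpa using hmax.hasDerivAt_eq_zero hderiv

end NullCone

theorem stmt_2_general {n : ℕ} (L : Matrix (Fin n) (Fin n) ℝ)
    (hsymm : MinkSymm L) (hsemi : NullNegSemi L)
    (e₀ xt : Fin n → ℝ)
    (he₀ : e₀ = fun j => if j.val = 0 then (1 : ℝ) else 0)
    (horth : mink e₀ xt = 0) (hunit : mink xt xt = 1)
    (x : Fin n → ℝ) (hx : x = e₀ + xt)
    (hLx : mink (L.mulVec x) x = 0) :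
    ∀ y : Fin n → ℝ, mink y y = 1 → mink y e₀ = 0 → mink y xt = 0 →
      mink (L.mulVec x) y = 0 := by
  intro y hyy hye hyx
  have hee : mink e₀ e₀ = -1 :=
    he₀ ▸ mink_basis_zero_self (pos_of_mink_self_ne_zero (hunit ▸ one_ne_zero))
  subst hx
  exact hsemi.mink_mulVec_eq_zero hsymm
    (isNull_add_smul_add_smul hee hunit hyy horth (by rwa [mink_comm]) (by rwa [mink_comm])) hLx

/-- orthogonality of `Lx` to all unit spacelike vectors Minkowski-orthogonal
to `e₀` and `x̃`, for `x = e₀ + x̃` null with `⟨Lx,x⟩ = 0`. -/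
theorem stmt_2 {n : ℕ} (hn : 3 ≤ n) (L : Matrix (Fin n) (Fin n) ℝ)
    (hsymm : MinkSymm L) (hsemi : NullNegSemi L)
    (e₀ xt : Fin n → ℝ)
    (he₀ : e₀ = fun j => if j.val = 0 then (1 : ℝ) else 0)
    (horth : mink e₀ xt = 0) (hunit : mink xt xt = 1)
    (x : Fin n → ℝ) (hx : x = e₀ + xt)
    (hLx : mink (L.mulVec x) x = 0) :
    ∀ y : Fin n → ℝ, mink y y = 1 → mink y e₀ = 0 → mink y xt = 0 →
      mink (L.mulVec x) y = 0 :=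
  stmt_2_general L hsymm hsemi e₀ xt he₀ horth hunit x hx hLx
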